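/- arXiv:2207.08335 — 5 statements merged into one kernel-verified Lean document; each statement's English description precedes it below -/
import Mathlib

section
/- A function f : [0,1] → [0,1] is a trade-off function (i.e., equals T(Y,Y')(α) = inf{E[1-φ(Y')] : E[φ(Y)] ≤ α} over measurable rejection rules φ for some pair of distributions Y, Y') only if f is convex, continuous, non-increasing, and f(x) ≤ 1 - x for all x ∈ [0,1]. In particular, for any two probability distributions Y, Y', the function α ↦ T(Y,Y')(α) is convex, non-increasing, and satisfies T(Y,Y')(α) ≤ 1 - α. -/
open Finset

/-! Over a finite sample space the rejection rules of level `α` form a compact set, so the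
infimum defining `T(α)` is attained. Mixing optimal rules at levels `x` and `y` gives a rule of
level `a x + b y` whose type II error is the same mixture, hence convexity, and the constant rule
`φ ≡ α` gives `T(α) ≤ 1 - α`. For continuity, shrinking an optimal rule of level `α` on the support
of `p` yields a rule of level `α' < α` losing at most `M (α - α')` in power, where `q ≤ M p` on
that support; with monotonicity this makes `T` Lipschitz. -/

/-- `p` is a probability mass function on a finite type. -/
def IsPMF {Ω : Type*} [Fintype Ω] (p : Ω → ℝ) : Prop :=
  (∀ x, 0 ≤ p x) ∧ ∑ x, p x = 1

/-- The trade-off function `T(Y,Y')(α) = inf { 1 - E[φ(Y')] : E[φ(Y)] ≤ α }`,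
the infimum being over rejection rules `φ` with values in `[0,1]`. -/
noncomputable def tradeoff {Ω : Type*} [Fintype Ω] (p q : Ω → ℝ) (α : ℝ) : ℝ :=
  sInf { β | ∃ φ : Ω → ℝ, (∀ x, φ x ∈ Set.Icc (0:ℝ) 1) ∧
    (∑ x, p x * φ x) ≤ α ∧ β = 1 - ∑ x, q x * φ x }

section RejectionRules

variable {Ω : Type*} [Fintype Ω]

def rulesOfLevel (p : Ω → ℝ) (α : ℝ) : Set (Ω → ℝ) :=
  Set.univ.pi (fun _ => Set.Icc 0 1) ∩ {φ | p ⬝ᵥ φ ≤ α}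

def typeIIError (q φ : Ω → ℝ) : ℝ := 1 - q ⬝ᵥ φ

section Rules

variable (p q : Ω → ℝ) {α : ℝ}

theorem tradeoff_eq_sInf_image (α : ℝ) :
    tradeoff p q α = sInf (typeIIError q '' rulesOfLevel p α) := by
  simp only [tradeoff, Set.image, rulesOfLevel, typeIIError, dotProduct, Set.mem_inter_iff,
    Set.mem_pi, Set.mem_univ, true_imp_iff, Set.mem_ofPred_eq, and_assoc, eq_comm]

theorem zero_mem_rulesOfLevel (hα : 0 ≤ α) : 0 ∈ rulesOfLevel p α :=
  ⟨fun _ _ => ⟨le_rfl, zero_le_one⟩, by simpa using hα⟩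

theorem rulesOfLevel_mono {α' : ℝ} (h : α ≤ α') : rulesOfLevel p α ⊆ rulesOfLevel p α' :=
  fun _ hφ => ⟨hφ.1, hφ.2.trans h⟩

theorem isCompact_rulesOfLevel (α : ℝ) : IsCompact (rulesOfLevel p α) :=
  (isCompact_univ_pi fun _ => isCompact_Icc).inter_right
    (isClosed_le (continuous_const.dotProduct continuous_id) continuous_const)

theorem continuous_typeIIError : Continuous (typeIIError q) :=
  continuous_const.sub (continuous_const.dotProduct continuous_id)

theorem tradeoff_le_typeIIError {φ : Ω → ℝ} (hφ : φ ∈ rulesOfLevel p α) :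
    tradeoff p q α ≤ typeIIError q φ := by
  rw [tradeoff_eq_sInf_image]
  exact csInf_le ((isCompact_rulesOfLevel p α).image (continuous_typeIIError q)).bddBelow
    (Set.mem_image_of_mem _ hφ)

theorem exists_rule_tradeoff_eq (hα : 0 ≤ α) :
    ∃ φ ∈ rulesOfLevel p α, tradeoff p q α = typeIIError q φ := by
  rw [tradeoff_eq_sInf_image]
  have hne : (typeIIError q '' rulesOfLevel p α).Nonempty :=
    (Set.nonempty_of_mem (zero_mem_rulesOfLevel p hα)).image _
  obtain ⟨φ, hφ, hφmin⟩ :=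
    ((isCompact_rulesOfLevel p α).image (continuous_typeIIError q)).sInf_mem hne
  exact ⟨φ, hφ, hφmin.symm⟩

theorem combo_mem_rulesOfLevel {φ ψ : Ω → ℝ} {α β a b : ℝ} (hφ : φ ∈ rulesOfLevel p α)
    (hψ : ψ ∈ rulesOfLevel p β) (ha : 0 ≤ a) (hb : 0 ≤ b) (hab : a + b = 1) :
    a • φ + b • ψ ∈ rulesOfLevel p (a * α + b * β) := by
  refine ⟨convex_pi (fun _ _ => convex_Icc 0 1) hφ.1 hψ.1 ha hb hab, ?_⟩
  rw [Set.mem_ofPred_eq, dotProduct_add, dotProduct_smul, dotProduct_smul, smul_eq_mul,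
    smul_eq_mul]
  gcongr
  exacts [hφ.2, hψ.2]

theorem typeIIError_combo (φ ψ : Ω → ℝ) {a b : ℝ} (hab : a + b = 1) :
    typeIIError q (a • φ + b • ψ) = a * typeIIError q φ + b * typeIIError q ψ := by
  simp only [typeIIError, dotProduct_add, dotProduct_smul, smul_eq_mul]
  linear_combination -hab

theorem convexOn_tradeoff : ConvexOn ℝ (Set.Ici 0) (tradeoff p q) := by
  refine ⟨convex_Ici 0, fun x hx y hy a b ha hb hab => ?_⟩
  obtain ⟨φ, hφ, hφx⟩ := exists_rule_tradeoff_eq p q hx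
  obtain ⟨ψ, hψ, hψy⟩ := exists_rule_tradeoff_eq p q hy
  calc tradeoff p q (a * x + b * y)
      ≤ typeIIError q (a • φ + b • ψ) :=
        tradeoff_le_typeIIError p q (combo_mem_rulesOfLevel p hφ hψ ha hb hab)
    _ = a * tradeoff p q x + b * tradeoff p q y := by
        rw [typeIIError_combo q φ ψ hab, hφx, hψy]

theorem antitoneOn_tradeoff : AntitoneOn (tradeoff p q) (Set.Ici 0) := by
  intro α hα α' _ hαα'
  obtain ⟨φ, hφ, hφα⟩ := exists_rule_tradeoff_eq p q hα
  exact hφα ▸ tradeoff_le_typeIIError p q (rulesOfLevel_mono p hαα' hφ)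

end Rules

section Lipschitz

variable {p q : Ω → ℝ}

theorem exists_forall_le_mul_of_ne_zero (hp : ∀ x, 0 ≤ p x) (hq : ∀ x, 0 ≤ q x) :
    ∃ M, 0 ≤ M ∧ ∀ x, p x ≠ 0 → q x ≤ M * p x := by
  have hratio : ∀ x ∈ univ, 0 ≤ q x / p x := fun x _ => div_nonneg (hq x) (hp x)
  refine ⟨∑ x, q x / p x, sum_nonneg hratio, fun x hx => ?_⟩
  calc q x = q x / p x * p x := (div_mul_cancel₀ _ hx).symm
    _ ≤ (∑ y, q y / p y) * p x :=
        mul_le_mul_of_nonneg_right (single_le_sum hratio (mem_univ x)) (hp x)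

theorem exists_mul_le_and_one_sub_mul_le {s α α' : ℝ} (hα' : 0 ≤ α') (h : α' ≤ α)
    (hs : s ≤ α) :
    ∃ t ∈ Set.Icc (0:ℝ) 1, t * s ≤ α' ∧ (1 - t) * s ≤ α - α' := by
  by_cases hsα' : s ≤ α'
  · exact ⟨1, ⟨zero_le_one, le_rfl⟩, by linarith, by rw [sub_self, zero_mul]; linarith⟩
  have hs0 : 0 < s := hα'.trans_lt (not_le.mp hsα')
  refine ⟨α' / s, ⟨div_nonneg hα' hs0.le, div_le_one_of_le₀ (not_le.mp hsα').le hs0.le⟩, ?_, ?_⟩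
  · rw [div_mul_cancel₀ _ hs0.ne']
  · rw [sub_mul, one_mul, div_mul_cancel₀ _ hs0.ne']
    linarith

variable (p) in
noncomputable def shrinkOnSupport (t : ℝ) (φ : Ω → ℝ) : Ω → ℝ :=
  fun x => if p x = 0 then φ x else t * φ x

theorem dotProduct_shrinkOnSupport (t : ℝ) (φ : Ω → ℝ) :
    p ⬝ᵥ shrinkOnSupport p t φ = t * (p ⬝ᵥ φ) := by
  simp only [dotProduct, shrinkOnSupport, mul_sum]
  refine sum_congr rfl fun x _ => ?_
  split_ifs with hx
  · simp [hx]
  · ring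

theorem shrinkOnSupport_mem_rulesOfLevel {φ : Ω → ℝ} {t α α' : ℝ} (hφ : φ ∈ rulesOfLevel p α)
    (ht : t ∈ Set.Icc (0:ℝ) 1) (hts : t * (p ⬝ᵥ φ) ≤ α') :
    shrinkOnSupport p t φ ∈ rulesOfLevel p α' := by
  refine ⟨fun x _ => ?_, by rwa [Set.mem_ofPred_eq, dotProduct_shrinkOnSupport]⟩
  obtain ⟨hφ0, hφ1⟩ := hφ.1 x trivial
  unfold shrinkOnSupport
  split_ifs
  · exact ⟨hφ0, hφ1⟩
  · exact ⟨mul_nonneg ht.1 hφ0, mul_le_one₀ ht.2 hφ0 hφ1⟩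

theorem dotProduct_sub_shrinkOnSupport_le {M t : ℝ} {φ : Ω → ℝ}
    (hM : ∀ x, p x ≠ 0 → q x ≤ M * p x) (hφ : ∀ x, 0 ≤ φ x) (ht : t ≤ 1) :
    q ⬝ᵥ φ - q ⬝ᵥ shrinkOnSupport p t φ ≤ M * ((1 - t) * (p ⬝ᵥ φ)) := by
  have hrhs : M * ((1 - t) * (p ⬝ᵥ φ)) = (M • p) ⬝ᵥ (φ - shrinkOnSupport p t φ) := by
    rw [smul_dotProduct, dotProduct_sub, dotProduct_shrinkOnSupport, smul_eq_mul]
    ring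
  rw [hrhs, ← dotProduct_sub]
  refine sum_le_sum fun x _ => ?_
  simp only [shrinkOnSupport, Pi.sub_apply, Pi.smul_apply, smul_eq_mul]
  split_ifs with hx
  · simp
  · exact mul_le_mul_of_nonneg_right (hM x hx) (sub_nonneg.2 (mul_le_of_le_one_left (hφ x) ht))

theorem tradeoff_le_add_mul_sub {M α α' : ℝ} (hM0 : 0 ≤ M) (hM : ∀ x, p x ≠ 0 → q x ≤ M * p x)
    (hα' : 0 ≤ α') (h : α' ≤ α) : tradeoff p q α' ≤ tradeoff p q α + M * (α - α') := by
  obtain ⟨φ, hφ, hφα⟩ := exists_rule_tradeoff_eq p q (hα'.trans h)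
  obtain ⟨t, ht, hts, hts'⟩ := exists_mul_le_and_one_sub_mul_le hα' h hφ.2
  have hloss := dotProduct_sub_shrinkOnSupport_le hM (fun x => (hφ.1 x trivial).1) ht.2
  calc tradeoff p q α' ≤ typeIIError q (shrinkOnSupport p t φ) :=
        tradeoff_le_typeIIError p q (shrinkOnSupport_mem_rulesOfLevel hφ ht hts)
    _ ≤ typeIIError q φ + M * ((1 - t) * (p ⬝ᵥ φ)) := by unfold typeIIError; linarith
    _ ≤ tradeoff p q α + M * (α - α') := by rw [hφα]; gcongr

theorem exists_lipschitzOnWith_tradeoff (hp : ∀ x, 0 ≤ p x) (hq : ∀ x, 0 ≤ q x) :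
    ∃ K, LipschitzOnWith K (tradeoff p q) (Set.Ici 0) := by
  obtain ⟨M, hM0, hM⟩ := exists_forall_le_mul_of_ne_zero hp hq
  refine ⟨M.toNNReal, LipschitzOnWith.of_dist_le_mul fun x hx y hy => ?_⟩
  rw [Real.coe_toNNReal _ hM0, Real.dist_eq, Real.dist_eq]
  wlog hxy : x ≤ y generalizing x y
  · rw [abs_sub_comm, abs_sub_comm x]
    exact this y hy x hx (le_of_not_ge hxy)
  rw [abs_sub_comm x, abs_of_nonneg (sub_nonneg.2 hxy),
    abs_of_nonneg (sub_nonneg.2 (antitoneOn_tradeoff p q hx hy hxy))]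
  linarith [tradeoff_le_add_mul_sub hM0 hM hx hxy]

end Lipschitz

theorem tradeoff_le_one_sub (p q : Ω → ℝ) (hp : ∑ x, p x = 1) (hq : ∑ x, q x = 1) {α : ℝ}
    (hα : α ∈ Set.Icc (0:ℝ) 1) : tradeoff p q α ≤ 1 - α := by
  have hconst : ∀ r : Ω → ℝ, ∑ x, r x = 1 → r ⬝ᵥ (fun _ => α) = α := fun r hr => by
    simp [dotProduct, ← sum_mul, hr]
  simpa [typeIIError, hconst q hq] using
    tradeoff_le_typeIIError p q (φ := fun _ => α) ⟨fun _ _ => hα, (hconst p hp).le⟩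

end RejectionRules

/-- A trade-off function of any pair of distributions is convex, continuous,
non-increasing on `[0,1]`, and satisfies `T(Y,Y')(α) ≤ 1 - α`. -/
theorem tradeoff_is_tradeoff_function {Ω : Type*} [Fintype Ω]
    (p q : Ω → ℝ) (hp : IsPMF p) (hq : IsPMF q) :
    ConvexOn ℝ (Set.Icc (0:ℝ) 1) (tradeoff p q) ∧
    ContinuousOn (tradeoff p q) (Set.Icc (0:ℝ) 1) ∧
    AntitoneOn (tradeoff p q) (Set.Icc (0:ℝ) 1) ∧
    ∀ α ∈ Set.Icc (0:ℝ) 1, tradeoff p q α ≤ 1 - α := by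
  obtain ⟨K, hK⟩ := exists_lipschitzOnWith_tradeoff hp.1 hq.1
  exact ⟨(convexOn_tradeoff p q).subset Set.Icc_subset_Ici_self (convex_Icc 0 1),
    hK.continuousOn.mono Set.Icc_subset_Ici_self,
    (antitoneOn_tradeoff p q).mono Set.Icc_subset_Ici_self,
    fun _ hα => tradeoff_le_one_sub p q hp.2 hq.2 hα⟩
end

section
/- Joint convexity of trade-off functions: Let I be a countable (or finite) index set, and for each i ∈ I let X_i and X'_i be probability distributions on a common measurable space. Let I be a random variable on the index set, and let X_I (resp. X'_I) denote the mixture distribution that samples i ∼ I and then samples from X_i (resp. X'_i). If f is a trade-off function with T(X_i, X'_i) ≥ f pointwise for all i, then T(X_I, X'_I) ≥ f pointwise. -/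
open Finset

/-!
Fix a test `φ` for the mixtures with type I error at most `α`. Against the `i`-th pair it has
type I error `gᵢ = ∑ Xᵢ φ`, so its type II error there is at least `f gᵢ`. Its type II error
against the mixtures is the `w`-average of these, which by Jensen is at least `f (∑ wᵢ gᵢ)`,
and `∑ wᵢ gᵢ ≤ α` with `f` antitone gives the bound `f α`.
-/

section Tradeoff

variable {Ω : Type*} [Fintype Ω]

theorem tradeoff_le_of_test {p q φ : Ω → ℝ} {α : ℝ} (hφ : ∀ x, φ x ∈ Set.Icc (0:ℝ) 1)
    (hα : ∑ x, p x * φ x ≤ α) : tradeoff p q α ≤ 1 - ∑ x, q x * φ x := by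
  refine csInf_le ⟨1 - ∑ x, |q x|, ?_⟩ ⟨φ, hφ, hα, rfl⟩
  rintro _ ⟨ψ, hψ, -, rfl⟩
  have hq : ∑ x, q x * ψ x ≤ ∑ x, |q x| := sum_le_sum fun x _ => by
    calc q x * ψ x ≤ |q x * ψ x| := le_abs_self _
      _ = |q x| * ψ x := by rw [abs_mul, abs_of_nonneg (hψ x).1]
      _ ≤ |q x| := mul_le_of_le_one_right (abs_nonneg _) (hψ x).2
  linarith

theorem le_tradeoff_of_forall_test {p q : Ω → ℝ} {α a : ℝ} (hα : 0 ≤ α)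
    (h : ∀ φ : Ω → ℝ, (∀ x, φ x ∈ Set.Icc (0:ℝ) 1) → ∑ x, p x * φ x ≤ α →
      a ≤ 1 - ∑ x, q x * φ x) :
    a ≤ tradeoff p q α := by
  refine le_csInf ⟨1, 0, fun _ => ⟨le_rfl, zero_le_one⟩, by simpa using hα, by simp⟩ ?_
  rintro _ ⟨φ, hφ, hle, rfl⟩
  exact h φ hφ hle

theorem IsPMF.sum_mul_mem_Icc {p φ : Ω → ℝ} (hp : IsPMF p)
    (hφ : ∀ x, φ x ∈ Set.Icc (0:ℝ) 1) : ∑ x, p x * φ x ∈ Set.Icc (0:ℝ) 1 := by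
  refine ⟨sum_nonneg fun x _ => mul_nonneg (hp.1 x) (hφ x).1, ?_⟩
  calc ∑ x, p x * φ x ≤ ∑ x, p x :=
        sum_le_sum fun x _ => mul_le_of_le_one_right (hp.1 x) (hφ x).2
    _ = 1 := hp.2

end Tradeoff

theorem sum_mixture_mul {ι Ω R : Type*} [CommSemiring R] (s : Finset ι) (t : Finset Ω)
    (w : ι → R) (X : ι → Ω → R) (φ : Ω → R) :
    ∑ x ∈ t, (∑ i ∈ s, w i * X i x) * φ x = ∑ i ∈ s, w i * ∑ x ∈ t, X i x * φ x := by
  simp_rw [sum_mul, mul_sum, mul_assoc]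
  exact sum_comm

theorem tradeoff_joint_convexity_general {ι Ω : Type*} [Fintype ι] [Fintype Ω]
    (w : ι → ℝ) (hw : IsPMF w)
    (X X' : ι → Ω → ℝ) (hX : ∀ i, IsPMF (X i))
    (f : ℝ → ℝ)
    (hconv : ConvexOn ℝ (Set.Icc (0:ℝ) 1) f)
    (hanti : AntitoneOn f (Set.Icc (0:ℝ) 1))
    (hf : ∀ i, ∀ α ∈ Set.Icc (0:ℝ) 1, f α ≤ tradeoff (X i) (X' i) α) :
    ∀ α ∈ Set.Icc (0:ℝ) 1,
      f α ≤ tradeoff (fun x => ∑ i, w i * X i x) (fun x => ∑ i, w i * X' i x) α := by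
  intro α hα
  refine le_tradeoff_of_forall_test hα.1 fun φ hφ hle => ?_
  set g := fun i => ∑ x, X i x * φ x
  have hg : ∀ i, g i ∈ Set.Icc (0:ℝ) 1 := fun i => (hX i).sum_mul_mem_Icc hφ
  have hmean : ∑ i, w i * g i ≤ α := by rwa [← sum_mixture_mul]
  calc f α ≤ f (∑ i, w i * g i) := hanti (hw.sum_mul_mem_Icc hg) hα hmean
    _ ≤ ∑ i, w i * f (g i) := by
        simpa only [smul_eq_mul] using hconv.map_sum_le (fun i _ => hw.1 i) hw.2 fun i _ => hg i
    _ ≤ ∑ i, w i * (1 - ∑ x, X' i x * φ x) := sum_le_sum fun i _ =>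
        mul_le_mul_of_nonneg_left ((hf i _ (hg i)).trans (tradeoff_le_of_test hφ le_rfl)) (hw.1 i)
    _ = 1 - ∑ x, (∑ i, w i * X' i x) * φ x := by
        simp only [sum_mixture_mul, mul_sub, mul_one, sum_sub_distrib, hw.2]

/-- Joint convexity of trade-off functions: if `T(X_i, X'_i) ≥ f` for all `i`,
then the mixtures satisfy `T(X_I, X'_I) ≥ f`. -/
theorem tradeoff_joint_convexity {ι Ω : Type*} [Fintype ι] [Fintype Ω]
    (w : ι → ℝ) (hw : IsPMF w)
    (X X' : ι → Ω → ℝ) (hX : ∀ i, IsPMF (X i)) (hX' : ∀ i, IsPMF (X' i))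
    (f : ℝ → ℝ)
    (hconv : ConvexOn ℝ (Set.Icc (0:ℝ) 1) f)
    (hcont : ContinuousOn f (Set.Icc (0:ℝ) 1))
    (hanti : AntitoneOn f (Set.Icc (0:ℝ) 1))
    (hbound : ∀ x ∈ Set.Icc (0:ℝ) 1, f x ≤ 1 - x)
    (hf : ∀ i, ∀ α ∈ Set.Icc (0:ℝ) 1, f α ≤ tradeoff (X i) (X' i) α) :
    ∀ α ∈ Set.Icc (0:ℝ) 1,
      f α ≤ tradeoff (fun x => ∑ i, w i * X i x) (fun x => ∑ i, w i * X' i x) α :=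
  tradeoff_joint_convexity_general w hw X X' hX f hconv hanti hf
end

section
/- Upper bound part of completeness: Let S be a nonempty set of trade-off functions and h' a trade-off function with f ⪯ h' for all f ∈ S (i.e., h'(α) ≤ f(α) pointwise for all f ∈ S). Then for every random variable F supported on S and every A : S → [0,1] with E[A(F)] ≤ α, one has h'(α) ≤ E[F(A(F))]. Consequently h'(α) ≤ h(α) where h(α) = inf_{F,A} {E[F(A(F))] : E[A(F)] ≤ α}. -/
open Finset

def IsTradeoffFun (f : ℝ → ℝ) : Prop :=
  ConvexOn ℝ (Set.Icc (0:ℝ) 1) f ∧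
  ContinuousOn f (Set.Icc (0:ℝ) 1) ∧
  AntitoneOn f (Set.Icc (0:ℝ) 1) ∧
  ∀ x ∈ Set.Icc (0:ℝ) 1, 0 ≤ f x ∧ f x ≤ 1 - x

noncomputable def supCandidate (S : Set (ℝ → ℝ)) (α : ℝ) : ℝ :=
  sInf { v | ∃ (n : ℕ) (w : Fin n → ℝ) (g : Fin n → (ℝ → ℝ)) (a : Fin n → ℝ),
    (∀ i, 0 ≤ w i) ∧ (∑ i, w i) = 1 ∧ (∀ i, g i ∈ S) ∧
    (∀ i, a i ∈ Set.Icc (0:ℝ) 1) ∧ (∑ i, w i * a i) ≤ α ∧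
    v = ∑ i, w i * g i (a i) }

theorem ConvexOn.le_sum_mul_of_antitoneOn {s : Set ℝ} {f : ℝ → ℝ} (hconv : ConvexOn ℝ s f)
    (hanti : AntitoneOn f s) {ι : Type*} (t : Finset ι) {w a : ι → ℝ}
    (hw : ∀ i ∈ t, 0 ≤ w i) (hw₁ : ∑ i ∈ t, w i = 1) (ha : ∀ i ∈ t, a i ∈ s)
    {x : ℝ} (hx : x ∈ s) (hmean : ∑ i ∈ t, w i * a i ≤ x) :
    f x ≤ ∑ i ∈ t, w i * f (a i) := by
  have hmean_mem : ∑ i ∈ t, w i * a i ∈ s := hconv.1.sum_mem hw hw₁ ha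
  calc f x ≤ f (∑ i ∈ t, w i * a i) := hanti hmean_mem hx hmean
    _ ≤ ∑ i ∈ t, w i * f (a i) := by simpa only [smul_eq_mul] using hconv.map_sum_le hw hw₁ ha

theorem le_supCandidate {S : Set (ℝ → ℝ)} (hS : S.Nonempty) {α : ℝ}
    (hα : α ∈ Set.Icc (0:ℝ) 1) {c : ℝ}
    (hc : ∀ (n : ℕ) (w : Fin n → ℝ) (g : Fin n → (ℝ → ℝ)) (a : Fin n → ℝ),
      (∀ i, 0 ≤ w i) → (∑ i, w i) = 1 → (∀ i, g i ∈ S) →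
      (∀ i, a i ∈ Set.Icc (0:ℝ) 1) → (∑ i, w i * a i) ≤ α →
      c ≤ ∑ i, w i * g i (a i)) :
    c ≤ supCandidate S α := by
  obtain ⟨f, hf⟩ := hS
  refine le_csInf ⟨f α, 1, fun _ => 1, fun _ => f, fun _ => α,
      fun _ => zero_le_one, by simp, fun _ => hf, fun _ => hα, by simp, by simp⟩ ?_
  rintro v ⟨n, w, g, a, hw, hw₁, hg, ha, hmean, rfl⟩
  exact hc n w g a hw hw₁ hg ha hmean

theorem tradeoff_sup_upper_bound_general (S : Set (ℝ → ℝ)) (hS : S.Nonempty)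
    (h' : ℝ → ℝ) (hh' : IsTradeoffFun h')
    (hub : ∀ f ∈ S, ∀ x ∈ Set.Icc (0:ℝ) 1, h' x ≤ f x)
    (α : ℝ) (hα : α ∈ Set.Icc (0:ℝ) 1) :
    (∀ (n : ℕ) (w : Fin n → ℝ) (g : Fin n → (ℝ → ℝ)) (a : Fin n → ℝ),
      (∀ i, 0 ≤ w i) → (∑ i, w i) = 1 → (∀ i, g i ∈ S) →
      (∀ i, a i ∈ Set.Icc (0:ℝ) 1) → (∑ i, w i * a i) ≤ α →
      h' α ≤ ∑ i, w i * g i (a i)) ∧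
    h' α ≤ supCandidate S α := by
  have hbound : ∀ (n : ℕ) (w : Fin n → ℝ) (g : Fin n → (ℝ → ℝ)) (a : Fin n → ℝ),
      (∀ i, 0 ≤ w i) → (∑ i, w i) = 1 → (∀ i, g i ∈ S) →
      (∀ i, a i ∈ Set.Icc (0:ℝ) 1) → (∑ i, w i * a i) ≤ α →
      h' α ≤ ∑ i, w i * g i (a i) := by
    intro n w g a hw hw₁ hg ha hmean
    calc h' α ≤ ∑ i, w i * h' (a i) :=
          hh'.1.le_sum_mul_of_antitoneOn hh'.2.2.1 univ (fun i _ => hw i) hw₁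
            (fun i _ => ha i) hα hmean
      _ ≤ ∑ i, w i * g i (a i) :=
          sum_le_sum fun i _ => mul_le_mul_of_nonneg_left (hub (g i) (hg i) (a i) (ha i)) (hw i)
  exact ⟨hbound, le_supCandidate hS hα hbound⟩

/-- Upper bound part of completeness: if `h'` is a trade-off function with
`f ⪯ h'` for all `f ∈ S` (i.e. `h' ≤ f` pointwise), then for every finitely supported
random variable `F` on `S` (weights `w`, values `g`) and every `A : S → [0,1]`
(values `a`) with `E[A(F)] ≤ α`, we have `h'(α) ≤ E[F(A(F))]`; consequently
`h'(α) ≤ h(α) = supCandidate S α`. -/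
theorem tradeoff_sup_upper_bound (S : Set (ℝ → ℝ)) (hS : S.Nonempty)
    (hSto : ∀ f ∈ S, IsTradeoffFun f)
    (h' : ℝ → ℝ) (hh' : IsTradeoffFun h')
    (hub : ∀ f ∈ S, ∀ x ∈ Set.Icc (0:ℝ) 1, h' x ≤ f x)
    (α : ℝ) (hα : α ∈ Set.Icc (0:ℝ) 1) :
    (∀ (n : ℕ) (w : Fin n → ℝ) (g : Fin n → (ℝ → ℝ)) (a : Fin n → ℝ),
      (∀ i, 0 ≤ w i) → (∑ i, w i) = 1 → (∀ i, g i ∈ S) →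
      (∀ i, a i ∈ Set.Icc (0:ℝ) 1) → (∑ i, w i * a i) ≤ α →
      h' α ≤ ∑ i, w i * g i (a i)) ∧
    h' α ≤ supCandidate S α :=
  tradeoff_sup_upper_bound_general S hS h' hh' hub α hα
end

section
/- Lower bound direction of the chain rule for trade-off functions: with X, X' having common finite support and Y, Y' jointly distributed as above, for every rejection rule φ on pairs (x,y) with type I error E_{x∼X}E_{y∼Y|X=x}[φ(x,y)] ≤ α, the type II error satisfies 1 - E_{x∼X'}E_{y'∼Y'|X'=x}[φ(x,y')] ≥ inf{E_{x∼X'}[f_x(α_x)] : E_{x∼X}[α_x] ≤ α}, where f_x = T(Y|_{X=x}, Y'|_{X'=x}). -/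
/-!
Choose `α_x` to be the type I error of the section `φ_x` under `Y|_{X=x}`. Then `E_{x∼X}[α_x]` is
the type I error of `φ`, so `(α_x)` is admissible for the infimum, and `φ_x` itself witnesses
`f_x(α_x) ≤ 1 - E[φ_x(Y'|_{X'=x})]`; averaging over `X'` gives the type II error of `φ`.
-/

open Finset

lemma IsPMF.sum_mul_mem_Icc_s16 {Ω : Type*} [Fintype Ω] {q : Ω → ℝ} (hq : IsPMF q)
    {ψ : Ω → ℝ} (hψ : ∀ x, ψ x ∈ Set.Icc (0:ℝ) 1) :
    (∑ x, q x * ψ x) ∈ Set.Icc (0:ℝ) 1 := by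
  refine ⟨sum_nonneg fun x _ => mul_nonneg (hq.1 x) (hψ x).1, ?_⟩
  calc ∑ x, q x * ψ x ≤ ∑ x, q x :=
        sum_le_sum fun x _ => mul_le_of_le_one_right (hq.1 x) (hψ x).2
    _ = 1 := hq.2

section Tradeoff

variable {Ω : Type*} [Fintype Ω] {p q : Ω → ℝ}

lemma tradeoff_nonneg (hq : IsPMF q) (α : ℝ) : 0 ≤ tradeoff p q α :=
  Real.sInf_nonneg fun _ ⟨_, hψ, _, hβ⟩ => hβ ▸ sub_nonneg.2 (hq.sum_mul_mem_Icc_s16 hψ).2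

lemma tradeoff_le (hq : IsPMF q) {ψ : Ω → ℝ} (hψ : ∀ x, ψ x ∈ Set.Icc (0:ℝ) 1) {α : ℝ}
    (h : ∑ x, p x * ψ x ≤ α) :
    tradeoff p q α ≤ 1 - ∑ x, q x * ψ x := by
  refine csInf_le ⟨0, ?_⟩ ⟨ψ, hψ, h, rfl⟩
  rintro _ ⟨ψ', hψ', -, rfl⟩
  exact sub_nonneg.2 (hq.sum_mul_mem_Icc_s16 hψ').2

end Tradeoff

lemma sum_mul_tradeoff_section_le {𝒳 𝒴 : Type*} [Fintype 𝒳] [Fintype 𝒴] {pX' : 𝒳 → ℝ}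
    (hX' : IsPMF pX') {kY kY' : 𝒳 → 𝒴 → ℝ} (hkY' : ∀ x, IsPMF (kY' x))
    {φ : 𝒳 × 𝒴 → ℝ} (hφ : ∀ p, φ p ∈ Set.Icc (0:ℝ) 1) :
    ∑ x, pX' x * tradeoff (kY x) (kY' x) (∑ y, kY x y * φ (x, y)) ≤
      1 - ∑ x, pX' x * ∑ y, kY' x y * φ (x, y) :=
  calc ∑ x, pX' x * tradeoff (kY x) (kY' x) (∑ y, kY x y * φ (x, y))
      ≤ ∑ x, pX' x * (1 - ∑ y, kY' x y * φ (x, y)) :=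
        sum_le_sum fun x _ => mul_le_mul_of_nonneg_left
          (tradeoff_le (hkY' x) (fun y => hφ (x, y)) le_rfl) (hX'.1 x)
    _ = 1 - ∑ x, pX' x * ∑ y, kY' x y * φ (x, y) := by
        simp only [mul_sub, mul_one, sum_sub_distrib, hX'.2]

theorem tradeoff_chain_rule_lower_bound_general {𝒳 𝒴 : Type*} [Fintype 𝒳] [Fintype 𝒴]
    (pX pX' : 𝒳 → ℝ) (hX' : IsPMF pX')
    (kY kY' : 𝒳 → 𝒴 → ℝ) (hkY : ∀ x, IsPMF (kY x)) (hkY' : ∀ x, IsPMF (kY' x))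
    (α : ℝ)
    (φ : 𝒳 × 𝒴 → ℝ) (hφ : ∀ p, φ p ∈ Set.Icc (0:ℝ) 1)
    (htypeI : ∑ x, pX x * ∑ y, kY x y * φ (x, y) ≤ α) :
    sInf { v | ∃ a : 𝒳 → ℝ, (∀ x, a x ∈ Set.Icc (0:ℝ) 1) ∧
        (∑ x, pX x * a x) ≤ α ∧
        v = ∑ x, pX' x * tradeoff (kY x) (kY' x) (a x) } ≤
      1 - ∑ x, pX' x * ∑ y, kY' x y * φ (x, y) := by
  refine le_trans (csInf_le ?_ ?_) (sum_mul_tradeoff_section_le (kY := kY) hX' hkY' hφ)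
  · refine ⟨0, ?_⟩
    rintro _ ⟨a, -, -, rfl⟩
    exact sum_nonneg fun x _ => mul_nonneg (hX'.1 x) (tradeoff_nonneg (hkY' x) _)
  · exact ⟨_, fun x => (hkY x).sum_mul_mem_Icc_s16 fun y => hφ (x, y), htypeI, rfl⟩

/-- Lower bound direction of the chain rule for trade-off functions: every joint
rejection rule `φ(x,y)` with type I error at most `α` has type II error at least
`inf { E_{x∼X'}[f_x(α_x)] : E_{x∼X}[α_x] ≤ α }`, where
`f_x = T(Y|_{X=x}, Y'|_{X'=x})`. -/
theorem tradeoff_chain_rule_lower_bound {𝒳 𝒴 : Type*} [Fintype 𝒳] [Fintype 𝒴]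
    (pX pX' : 𝒳 → ℝ) (hX : IsPMF pX) (hX' : IsPMF pX')
    (hsupp : ∀ x, pX x ≠ 0 ↔ pX' x ≠ 0)
    (kY kY' : 𝒳 → 𝒴 → ℝ) (hkY : ∀ x, IsPMF (kY x)) (hkY' : ∀ x, IsPMF (kY' x))
    (α : ℝ) (hα : α ∈ Set.Icc (0:ℝ) 1)
    (φ : 𝒳 × 𝒴 → ℝ) (hφ : ∀ p, φ p ∈ Set.Icc (0:ℝ) 1)
    (htypeI : ∑ x, pX x * ∑ y, kY x y * φ (x, y) ≤ α) :
    sInf { v | ∃ a : 𝒳 → ℝ, (∀ x, a x ∈ Set.Icc (0:ℝ) 1) ∧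
        (∑ x, pX x * a x) ≤ α ∧
        v = ∑ x, pX' x * tradeoff (kY x) (kY' x) (a x) } ≤
      1 - ∑ x, pX' x * ∑ y, kY' x y * φ (x, y) :=
  tradeoff_chain_rule_lower_bound_general pX pX' hX' kY kY' hkY hkY' α φ hφ htypeI
end

section
/- Deterministic adversaries suffice for d-𝒟 DP: let (𝒟, ⪯, D) be a generalized probability distance satisfying joint convexity (if D(X_i, X'_i) ⪯ d for all i ∈ ℐ and I is a random variable on ℐ, then D(X_I, X'_I) ⪯ d, where X_I is the mixture). If for every deterministic adversary B and every pair of neighboring datasets x, x' we have D(View(B ↔ M(x)), View(B ↔ M(x'))) ⪯ d, then the same holds for every randomized adversary B, i.e., M is d-𝒟 DP. -/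
open Finset

/-- The view distribution (on coins × views) of the deterministic adversary with
fixed coins `r`: a point mass at `r` on the first coordinate, paired with the view
distribution `v` of the interaction. -/
def detViewDist {R V : Type*} [Fintype R] [Fintype V] [DecidableEq R]
    (r : R) (v : V → ℝ) : R × V → ℝ :=
  fun p => (if p.1 = r then 1 else 0) * v p.2

/-! The randomized adversary's view `(R, View(B_R ↔ M(x)))` is exactly the mixture, weighted by
the coin distribution, of the views of the deterministic adversaries `B_r`; joint convexity
applied to this family transfers the bound from every `B_r` to the randomized adversary. -/

theorem sum_mul_detViewDist {R V : Type*} [Fintype R] [Fintype V] [DecidableEq R]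
    (w : R → ℝ) (v : R → V → ℝ) :
    (fun p : R × V => ∑ r, w r * detViewDist r (v r) p) = fun p => w p.1 * v p.1 p.2 := by
  funext p
  rw [Finset.sum_eq_single p.1]
  · simp [detViewDist]
  · intro r _ hr
    simp [detViewDist, Ne.symm hr]
  · simp

theorem deterministic_adversaries_suffice_general
    {X : Type*} (Neighbor : X → X → Prop)
    {R V : Type*} [Fintype R] [Fintype V] [DecidableEq R]
    {𝒟 : Type*} [PartialOrder 𝒟]
    (D : (R × V → ℝ) → (R × V → ℝ) → 𝒟) (d : 𝒟)
    -- `view x r` is the distribution of `View(B_r ↔ M(x))` for the deterministic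
    -- adversary `B_r` obtained by fixing the coins to `r`
    (view : X → R → (V → ℝ))
    -- joint convexity of the generalized distance `D`
    (hjc : ∀ w : R → ℝ, IsPMF w →
      ∀ Y Y' : R → (R × V → ℝ), (∀ r, D (Y r) (Y' r) ≤ d) →
        D (fun p => ∑ r, w r * Y r p) (fun p => ∑ r, w r * Y' r p) ≤ d)
    -- privacy against every deterministic adversary
    (hdet : ∀ x x', Neighbor x x' → ∀ r : R,
      D (detViewDist r (view x r)) (detViewDist r (view x' r)) ≤ d) :
    -- privacy against every randomized adversary: its view is `(R, View(B_R ↔ M(x)))`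
    ∀ x x', Neighbor x x' → ∀ w : R → ℝ, IsPMF w →
      D (fun p => w p.1 * view x p.1 p.2) (fun p => w p.1 * view x' p.1 p.2) ≤ d := by
  intro x x' hx w hw
  have hmix := hjc w hw (fun r => detViewDist r (view x r)) (fun r => detViewDist r (view x' r))
    (hdet x x' hx)
  rwa [sum_mul_detViewDist, sum_mul_detViewDist] at hmix

/-- Deterministic adversaries suffice for `d`-`𝒟` DP: let `(𝒟, ⪯, D)` be a
generalized probability distance (on distributions over coin–view pairs)
satisfying joint convexity.  If for every deterministic adversary (coin value `r`)
and neighboring `x, x'` the views are `d`-close, then for every randomized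
adversary (coin distribution `w`) the views `(R, View(B_R ↔ M(x)))` are `d`-close. -/
theorem deterministic_adversaries_suffice
    {X : Type*} (Neighbor : X → X → Prop)
    {R V : Type*} [Fintype R] [Fintype V] [DecidableEq R]
    {𝒟 : Type*} [PartialOrder 𝒟]
    (D : (R × V → ℝ) → (R × V → ℝ) → 𝒟) (d : 𝒟)
    -- `view x r` is the distribution of `View(B_r ↔ M(x))` for the deterministic
    -- adversary `B_r` obtained by fixing the coins to `r`
    (view : X → R → (V → ℝ)) (hview : ∀ x r, IsPMF (view x r))
    -- joint convexity of the generalized distance `D`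
    (hjc : ∀ w : R → ℝ, IsPMF w →
      ∀ Y Y' : R → (R × V → ℝ), (∀ r, D (Y r) (Y' r) ≤ d) →
        D (fun p => ∑ r, w r * Y r p) (fun p => ∑ r, w r * Y' r p) ≤ d)
    -- privacy against every deterministic adversary
    (hdet : ∀ x x', Neighbor x x' → ∀ r : R,
      D (detViewDist r (view x r)) (detViewDist r (view x' r)) ≤ d) :
    -- privacy against every randomized adversary: its view is `(R, View(B_R ↔ M(x)))`
    ∀ x x', Neighbor x x' → ∀ w : R → ℝ, IsPMF w →
      D (fun p => w p.1 * view x p.1 p.2) (fun p => w p.1 * view x' p.1 p.2) ≤ d :=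
  deterministic_adversaries_suffice_general Neighbor D d view hjc hdet
end
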